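/- For every real k > 0, the ratio ∏_{j=1}^{N} Γ(j)Γ(j+2k)/Γ(j+k)² divided by N^{k²} converges as N → ∞ to G(1+k)²/G(1+2k), where G is the Barnes G-function. -/

import Mathlib

open Filter

/-- The Barnes G-function, defined by its Weierstrass product:
`G(1+z) = (2π)^{z/2} exp(−(z+z²(1+γ))/2) ∏_{n≥1} (1+z/n)^n e^{−z+z²/(2n)}`. -/
noncomputable def BarnesG (w : ℝ) : ℝ :=
  (2 * Real.pi) ^ ((w - 1) / 2) *
    Real.exp (-((w - 1) + (w - 1) ^ 2 * (1 + Real.eulerMascheroniConstant)) / 2) *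
    ∏' n : ℕ,
      ((1 + (w - 1) / (n + 1)) ^ (n + 1) *
        Real.exp (-(w - 1) + (w - 1) ^ 2 / (2 * (n + 1))))

open Topology Real Finset

/-!
Write `a x = Γ(x)Γ(x+2k)/Γ(x+k)²`. Then `a (x+1) = a x · x(x+2k)/(x+k)²` and `a n → 1`, so Abel
summation gives `log ∏_{j ≤ N} a j = N log a (N+1) - ∑_{j ≤ N} j log (j(j+2k)/(j+k)²)`.
Each step `log (j(j+2k)/(j+k)²) = log (1 - k²/(j+k)²)` lies between `-k²/(j(j+2k))` and
`-k²/(j+k)²`; comparing it with the telescoping differences of `k²/(j-1)` and of `k²/(j+k)` and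
using `log a n → 0` traps `log a (N+1)` between `k²/(N+1+k)` and `k²/N`, so
`N log a (N+1) → k²`. In the second sum, `j log (j(j+2k)/(j+k)²) = f_{2k}(j) - 2 f_k(j) - k²/j`,
where `f_z(j)` is the logarithm of the `j`-th Weierstrass factor of `G(1+z)`; so the harmonic sum
produces `k² γ` and the rest converges to `2 ∑ f_k - ∑ f_{2k}`, which together with `k²` is
`log (G(1+k)²/G(1+2k))`.
-/

noncomputable def barnesTerm (z : ℝ) (n : ℕ) : ℝ :=
  (n + 1) * log (1 + z / (n + 1)) - z + z ^ 2 / (2 * (n + 1))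

lemma abs_barnesTerm_le {z : ℝ} {n : ℕ} (h : 2 * |z| ≤ n + 1) :
    |barnesTerm z n| ≤ 2 * |z| ^ 3 / (n + 1) ^ 2 := by
  have hn : (0 : ℝ) < n + 1 := by positivity
  set x := z / (n + 1) with hx_def
  have hx : |x| ≤ 1 / 2 := by
    rw [abs_div, abs_of_pos hn, div_le_iff₀ hn]; linarith
  have htaylor := abs_log_sub_add_sum_range_le (x := -x) (by rw [abs_neg]; linarith) 2
  norm_num [sum_range_succ] at htaylor
  have heq : barnesTerm z n = (n + 1) * (-x + x ^ 2 / 2 + log (1 + x)) := by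
    rw [barnesTerm, hx_def]; field_simp; ring
  have hbound : |x| ^ 3 / (1 - |x|) ≤ 2 * |x| ^ 3 := by
    rw [div_le_iff₀ (by linarith)]
    nlinarith [mul_nonneg (pow_nonneg (abs_nonneg x) 3) (by linarith : 0 ≤ 1 / 2 - |x|)]
  calc |barnesTerm z n| ≤ (n + 1) * (2 * |x| ^ 3) := by
        rw [heq, abs_mul, abs_of_pos hn]; gcongr; exact htaylor.trans hbound
    _ = 2 * |z| ^ 3 / (n + 1) ^ 2 := by rw [hx_def, abs_div, abs_of_pos hn]; field_simp

lemma summable_barnesTerm (z : ℝ) : Summable (barnesTerm z) := by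
  have hsq := ((summable_nat_add_iff 1).mpr
    (summable_one_div_nat_pow.mpr one_lt_two)).mul_left (2 * |z| ^ 3)
  refine hsq.of_norm_bounded_eventually_nat ?_
  filter_upwards [(tendsto_natCast_atTop_atTop (R := ℝ)).eventually_ge_atTop (2 * |z|)] with n hn
  rw [norm_eq_abs]
  refine (abs_barnesTerm_le (by linarith)).trans_eq ?_
  push_cast
  ring

lemma BarnesG_one_add {z : ℝ} (hz : -1 < z) :
    BarnesG (1 + z) = exp (z / 2 * log (2 * π) - (z + z ^ 2 * (1 + eulerMascheroniConstant)) / 2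
      + ∑' n, barnesTerm z n) := by
  have hbase (n : ℕ) : 0 < 1 + z / (n + 1) := by
    have : -1 < z / (n + 1) := by
      rw [lt_div_iff₀ (by positivity)]; linarith [n.cast_nonneg (α := ℝ)]
    linarith
  have hfactor (n : ℕ) : 0 < (1 + z / (n + 1)) ^ (n + 1) * exp (-z + z ^ 2 / (2 * (n + 1))) := by
    have := hbase n
    positivity
  have hlog (n : ℕ) : log ((1 + z / (n + 1)) ^ (n + 1) * exp (-z + z ^ 2 / (2 * (n + 1)))) =
      barnesTerm z n := by
    rw [log_mul (pow_pos (hbase n) _).ne' (exp_pos _).ne', log_pow, log_exp, barnesTerm]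
    push_cast; ring
  rw [BarnesG, add_sub_cancel_left,
    ← rexp_tsum_eq_tprod hfactor (by simpa only [hlog] using summable_barnesTerm z),
    rpow_def_of_pos (by positivity)]
  simp only [hlog, ← exp_add]
  ring_nf

lemma BarnesG_one_add_sq_div {k : ℝ} (hk : -1 / 2 < k) :
    BarnesG (1 + k) ^ 2 / BarnesG (1 + 2 * k) = exp (k ^ 2 * (1 + eulerMascheroniConstant)
      + (2 * ∑' n, barnesTerm k n - ∑' n, barnesTerm (2 * k) n)) := by
  rw [BarnesG_one_add (by linarith), BarnesG_one_add (by linarith), ← exp_nat_mul, ← exp_sub]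
  congr 1
  push_cast
  ring

noncomputable def gammaRatio (k x : ℝ) : ℝ :=
  Gamma x * Gamma (x + 2 * k) / Gamma (x + k) ^ 2

section GammaRatio

variable {k x : ℝ}

lemma gammaRatio_pos (hk : 0 ≤ k) (hx : 0 < x) : 0 < gammaRatio k x := by
  have := Gamma_pos_of_pos hx
  have := Gamma_pos_of_pos (by linarith : 0 < x + 2 * k)
  have := Gamma_pos_of_pos (by linarith : 0 < x + k)
  unfold gammaRatio
  positivity

lemma gammaRatio_add_one (hk : 0 ≤ k) (hx : 0 < x) :
    gammaRatio k (x + 1) = gammaRatio k x * (x * (x + 2 * k) / (x + k) ^ 2) := by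
  have := (Gamma_pos_of_pos (by linarith : 0 < x + k)).ne'
  unfold gammaRatio
  rw [add_right_comm, add_right_comm x 1 k, Gamma_add_one hx.ne',
    Gamma_add_one (by linarith : 0 < x + 2 * k).ne', Gamma_add_one (by linarith : 0 < x + k).ne']
  field_simp

lemma log_gammaRatio_add_one (hk : 0 ≤ k) (hx : 0 < x) :
    log (gammaRatio k (x + 1)) = log (gammaRatio k x) + log (x * (x + 2 * k) / (x + k) ^ 2) := by
  rw [gammaRatio_add_one hk hx, log_mul (gammaRatio_pos hk hx).ne']
  have : 0 < x + k := by linarith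
  have : 0 < x + 2 * k := by linarith
  positivity

lemma neg_sq_div_mul_le_log (hk : 0 ≤ k) (hx : 0 < x) :
    -(k ^ 2 / (x * (x + 2 * k))) ≤ log (x * (x + 2 * k) / (x + k) ^ 2) := by
  have : 0 < x + k := by linarith
  have : 0 < x + 2 * k := by linarith
  refine le_of_eq_of_le ?_ (one_sub_inv_le_log_of_pos (by positivity))
  field_simp
  ring

lemma log_le_neg_sq_div_sq (hk : 0 ≤ k) (hx : 0 < x) :
    log (x * (x + 2 * k) / (x + k) ^ 2) ≤ -(k ^ 2 / (x + k) ^ 2) := by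
  have : 0 < x + k := by linarith
  have : 0 < x + 2 * k := by linarith
  refine (log_le_sub_one_of_pos (by positivity)).trans_eq ?_
  field_simp
  ring

/-- Wendel's limit `Γ(n+1+x) ~ Γ(n+1) nˣ`, read off the Euler limit formula for `log Γ`. -/
lemma tendsto_log_Gamma_add_nat_sub (hx : 0 < x) :
    Tendsto (fun n : ℕ => log (Gamma (n + 1 + x)) - log (Gamma (n + 1)) - x * log n) atTop
      (𝓝 0) := by
  have hfeq {y : ℝ} (hy : 0 < y) : (log ∘ Gamma) (y + 1) = (log ∘ Gamma) y + log y := by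
    rw [Function.comp_apply, Gamma_add_one hy.ne', log_mul hy.ne' (Gamma_pos_of_pos hy).ne',
      add_comm, Function.comp_apply]
  rw [← sub_self (log (Gamma x))]
  refine ((BohrMollerup.tendsto_log_gamma hx).const_sub _).congr fun n => ?_
  have := BohrMollerup.f_add_nat_eq hfeq hx (n + 1)
  simp only [Function.comp_apply, Nat.cast_add, Nat.cast_one] at this
  rw [BohrMollerup.logGammaSeq, add_comm _ x, this, Gamma_nat_eq_factorial]
  ring

lemma tendsto_log_gammaRatio_nat (hk : 0 < k) :
    Tendsto (fun n : ℕ => log (gammaRatio k (n + 1))) atTop (𝓝 0) := by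
  have hk2 : 0 < 2 * k := by linarith
  have h := (tendsto_log_Gamma_add_nat_sub hk2).sub
    ((tendsto_log_Gamma_add_nat_sub hk).const_mul 2)
  rw [mul_zero, sub_zero] at h
  refine h.congr fun n => ?_
  have hn : (0 : ℝ) < n + 1 := by positivity
  have hΓ₀ := Gamma_pos_of_pos hn
  have hΓ₁ := Gamma_pos_of_pos (by linarith : (0 : ℝ) < n + 1 + k)
  have hΓ₂ := Gamma_pos_of_pos (by linarith : (0 : ℝ) < n + 1 + 2 * k)
  unfold gammaRatio
  rw [log_div (by positivity) (by positivity), log_mul hΓ₀.ne' hΓ₂.ne', log_pow]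
  push_cast
  ring

lemma log_gammaRatio_nat_le (hk : 0 < k) {n : ℕ} (hn : n ≠ 0) :
    log (gammaRatio k (n + 1)) ≤ k ^ 2 / n := by
  let s : ℕ → ℝ := fun m => log (gammaRatio k (m + 1 + 1)) - k ^ 2 / (m + 1)
  have hs : Monotone s := monotone_nat_of_le_succ fun m => by
    have hm : (0 : ℝ) < m + 1 + 1 := by positivity
    have hstep := neg_sq_div_mul_le_log hk.le hm
    have hcmp : k ^ 2 / ((m + 1 + 1) * (m + 1 + 1 + 2 * k)) ≤
        k ^ 2 / (m + 1) - k ^ 2 / (m + 1 + 1) := calc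
      _ ≤ k ^ 2 / ((m + 1) * (m + 1 + 1)) :=
        div_le_div_of_nonneg_left (by positivity) (by positivity) (by nlinarith)
      _ = k ^ 2 / (m + 1) - k ^ 2 / (m + 1 + 1) := by field_simp; ring
    simp only [s]
    push_cast
    rw [log_gammaRatio_add_one hk.le hm]
    linarith
  have hlim : Tendsto s atTop (𝓝 (0 - k ^ 2 * 0)) :=
    ((tendsto_log_gammaRatio_nat hk).comp (tendsto_add_atTop_nat 1)).sub
      (tendsto_one_div_add_atTop_nhds_zero_nat.const_mul _) |>.congr fun m => by
        simp [s, div_eq_mul_inv]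
  obtain ⟨m, rfl⟩ := Nat.exists_eq_succ_of_ne_zero hn
  have := hs.ge_of_tendsto hlim m
  simp only [s] at this
  push_cast
  linarith

lemma sq_div_le_log_gammaRatio_nat (hk : 0 < k) (n : ℕ) :
    k ^ 2 / (n + 1 + k) ≤ log (gammaRatio k (n + 1)) := by
  let t : ℕ → ℝ := fun m => log (gammaRatio k (m + 1)) - k ^ 2 / (m + 1 + k)
  have ht : Antitone t := antitone_nat_of_succ_le fun m => by
    have hm : (0 : ℝ) < m + 1 := by positivity
    have hstep := log_le_neg_sq_div_sq hk.le hm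
    have hcmp : k ^ 2 / (m + 1 + k) - k ^ 2 / (m + 1 + 1 + k) ≤ k ^ 2 / (m + 1 + k) ^ 2 := calc
      _ = k ^ 2 / ((m + 1 + k) * (m + 1 + k + 1)) := by field_simp; ring
      _ ≤ k ^ 2 / (m + 1 + k) ^ 2 :=
        div_le_div_of_nonneg_left (by positivity) (by positivity) (by nlinarith)
    simp only [t]
    push_cast
    rw [log_gammaRatio_add_one hk.le hm]
    linarith
  have hlim : Tendsto t atTop (𝓝 (0 - 0)) :=
    (tendsto_log_gammaRatio_nat hk).sub (tendsto_const_nhds.div_atTop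
      (tendsto_atTop_add_const_right _ _ (tendsto_atTop_add_const_right _ _
        tendsto_natCast_atTop_atTop)))
  have := ht.le_of_tendsto hlim n
  simp only [t] at this
  linarith

lemma tendsto_mul_log_gammaRatio_nat (hk : 0 < k) :
    Tendsto (fun n : ℕ => n * log (gammaRatio k (n + 1))) atTop (𝓝 (k ^ 2)) := by
  have hlow : Tendsto (fun n : ℕ => k ^ 2 * (n / (n + (1 + k)))) atTop (𝓝 (k ^ 2)) := by
    simpa using (tendsto_natCast_div_add_atTop (1 + k)).const_mul (k ^ 2)
  refine tendsto_of_tendsto_of_tendsto_of_le_of_le' hlow tendsto_const_nhds ?_ ?_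
  · refine Eventually.of_forall fun n => ?_
    calc k ^ 2 * (n / (n + (1 + k))) = n * (k ^ 2 / (n + 1 + k)) := by ring
      _ ≤ n * log (gammaRatio k (n + 1)) := by
        gcongr; exact sq_div_le_log_gammaRatio_nat hk n
  · filter_upwards [eventually_ne_atTop 0] with n hn
    calc n * log (gammaRatio k (n + 1)) ≤ n * (k ^ 2 / n) := by
          gcongr; exact log_gammaRatio_nat_le hk hn
      _ = k ^ 2 := by field_simp

lemma add_one_mul_log_eq_barnesTerm (hk : 0 ≤ k) (n : ℕ) :
    (n + 1) * log ((n + 1) * (n + 1 + 2 * k) / (n + 1 + k) ^ 2) =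
      barnesTerm (2 * k) n - 2 * barnesTerm k n - k ^ 2 / (n + 1) := by
  have hn : (0 : ℝ) < n + 1 := by positivity
  rw [show (n + 1) * (n + 1 + 2 * k) / (n + 1 + k) ^ 2 =
      (1 + 2 * k / (n + 1)) / (1 + k / (n + 1)) ^ 2 by field_simp, log_div (by positivity) (by positivity), log_pow, barnesTerm, barnesTerm]
  field_simp
  ring

lemma prod_gammaRatio_pos (hk : 0 ≤ k) (N : ℕ) : 0 < ∏ j ∈ Icc 1 N, gammaRatio k j :=
  prod_pos fun _ hj => gammaRatio_pos hk (Nat.cast_pos.mpr (mem_Icc.mp hj).1)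

lemma log_prod_gammaRatio (hk : 0 ≤ k) (N : ℕ) :
    log (∏ j ∈ Icc 1 N, gammaRatio k j) = N * log (gammaRatio k (N + 1)) +
      (2 * ∑ n ∈ range N, barnesTerm k n - ∑ n ∈ range N, barnesTerm (2 * k) n) +
      k ^ 2 * harmonic N := by
  induction N with
  | zero => simp
  | succ N ih =>
    have hN : (0 : ℝ) < N + 1 := by positivity
    rw [prod_Icc_succ_top (by omega), log_mul (prod_gammaRatio_pos hk N).ne'
      (gammaRatio_pos hk (by positivity)).ne', ih]
    push_cast
    rw [log_gammaRatio_add_one hk hN, sum_range_succ, sum_range_succ, harmonic_succ]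
    push_cast
    linear_combination (-1 : ℝ) * add_one_mul_log_eq_barnesTerm hk N

end GammaRatio

/-- The `2k`-th CUE moment `∏_{j=1}^N Γ(j)Γ(j+2k)/Γ(j+k)²` is asymptotic to
`N^{k²} G(1+k)²/G(1+2k)`. -/
theorem moments_asymptotic (k : ℝ) (hk : 0 < k) :
    Tendsto
      (fun N : ℕ =>
        (∏ j ∈ Finset.Icc 1 N,
            Real.Gamma j * Real.Gamma (j + 2 * k) / Real.Gamma (j + k) ^ 2) /
          (N : ℝ) ^ (k ^ 2))
      atTop (nhds (BarnesG (1 + k) ^ 2 / BarnesG (1 + 2 * k))) := by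
  have hlim := ((tendsto_mul_log_gammaRatio_nat hk).add
    (((summable_barnesTerm k).hasSum.tendsto_sum_nat.const_mul 2).sub
      (summable_barnesTerm (2 * k)).hasSum.tendsto_sum_nat)).add
    (tendsto_harmonic_sub_log.const_mul (k ^ 2))
  rw [BarnesG_one_add_sq_div (by linarith)]
  convert hlim.rexp.congr' ?_ using 3
  · ring
  filter_upwards [eventually_ne_atTop 0] with N hN
  change _ = (∏ j ∈ Icc 1 N, gammaRatio k j) / _
  rw [rpow_def_of_pos (by positivity), ← exp_log (prod_gammaRatio_pos hk.le N), ← exp_sub,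
    log_prod_gammaRatio hk.le N]
  congr 1
  ring
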